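/- arXiv:2509.05930 — 2 statements merged into one kernel-verified Lean document; each statement's English description precedes it below -/
import Mathlib

section
/- Let f : ℝ^d → ℝ be m-strongly convex and ℓ-smooth, let λ₁, λ₂ > 0, w ∈ ℕ, τ, z ∈ ℝ^d, and define φ(x; u, h) = ‖(x+h)/(w+1) − τ‖² + λ₁ f(x − u) + λ₂ ‖x − z‖². Let x(u,h) = argmin_x φ(x; u, h) and η = 2/(w+1)² + λ₁ m + 2λ₂. Then for all u, û, h, ĥ ∈ ℝ^d: ‖x(û, ĥ) − x(u, h)‖ ≤ (1/η)[λ₁ ℓ ‖û − u‖ + (2/(w+1)²) ‖ĥ − h‖]. -/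
/-!
Each `φ(·; u, h)` is a sum of strongly convex pieces with moduli `2/(w+1)²`, `λ₁ m` and `2λ₂`,
hence `η`-strongly convex, so it grows at least like `η/2 ‖x - x(u,h)‖²` away from its minimizer.
Adding the two growth inequalities for `x₁ = x(u,h)` and `x₂ = x(û,ĥ)` bounds `η ‖x₂ - x₁‖²` by the
change of `φ(û,ĥ) - φ(u,h)` between `x₂` and `x₁`. In that difference the `f`-part is controlled by
the mean value theorem and the `ℓ`-Lipschitz gradient, and the quadratic part is the linear function
`x ↦ 2/(w+1)² ⟪x, ĥ - h⟫` plus a constant, controlled by Cauchy–Schwarz.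
-/

open RealInnerProductSpace Set

section StrongConvexity

variable {E : Type*} [NormedAddCommGroup E] [NormedSpace ℝ E] {s : Set E} {m n : ℝ} {f g : E → ℝ}

lemma StrongConvexOn.add (hf : StrongConvexOn s m f) (hg : StrongConvexOn s n g) :
    StrongConvexOn s (m + n) (f + g) := by
  refine (UniformConvexOn.add hf hg).mono fun r ↦ le_of_eq ?_
  simp only [Pi.add_apply]
  ring

lemma StrongConvexOn.const_mul (hf : StrongConvexOn s m f) {c : ℝ} (hc : 0 ≤ c) :
    StrongConvexOn s (c * m) (fun x ↦ c * f x) := by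
  refine ⟨hf.1, fun x hx y hy a b ha hb hab ↦ ?_⟩
  have := mul_le_mul_of_nonneg_left (hf.2 hx hy ha hb hab) hc
  simp only [smul_eq_mul] at this ⊢
  linarith

lemma StrongConvexOn.comp_smul_add (hf : StrongConvexOn univ m f) (c : ℝ) (v : E) :
    StrongConvexOn univ (c ^ 2 * m) (fun x ↦ f (c • x + v)) := by
  refine ⟨convex_univ, fun x _ y _ a b ha hb hab ↦ ?_⟩
  have hcomb : c • (a • x + b • y) + v = a • (c • x + v) + b • (c • y + v) := by
    linear_combination (norm := module) (-hab) • v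
  have hdist : ‖(c • x + v) - (c • y + v)‖ ^ 2 = c ^ 2 * ‖x - y‖ ^ 2 := by
    rw [add_sub_add_right_eq_sub, ← smul_sub, norm_smul, mul_pow, Real.norm_eq_abs, sq_abs]
  have := hf.2 (mem_univ (c • x + v)) (mem_univ (c • y + v)) ha hb hab
  simp only [smul_eq_mul] at this ⊢
  rw [hdist] at this
  rw [hcomb]
  linarith

end StrongConvexity

section InnerProductSpace

variable {E : Type*} [NormedAddCommGroup E] [InnerProductSpace ℝ E] {s : Set E} {m : ℝ} {f : E → ℝ}

lemma strongConvexOn_univ_norm_sq : StrongConvexOn univ 2 (fun x : E ↦ ‖x‖ ^ 2) := by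
  rw [strongConvexOn_iff_convex, show (fun x : E ↦ ‖x‖ ^ 2 - 2 / 2 * ‖x‖ ^ 2) = fun _ ↦ 0 by
    funext x; ring]
  exact convexOn_const 0 convex_univ

lemma strongConvexOn_univ_of_le_add_inner (f' : E → E)
    (hf : ∀ a b, f a + ⟪f' a, b - a⟫ + m / 2 * ‖b - a‖ ^ 2 ≤ f b) :
    StrongConvexOn univ m f := by
  refine ⟨convex_univ, fun x _ y _ a b ha hb hab ↦ ?_⟩
  set p := a • x + b • y
  have hx : x - p = b • (x - y) := by linear_combination (norm := module) (-hab) • x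
  have hy : y - p = a • (y - x) := by linear_combination (norm := module) (-hab) • y
  have h₁ := hf p x
  have h₂ := hf p y
  -- the first-order terms cancel because `a • (x - p) + b • (y - p) = 0`
  rw [hx, inner_smul_right, norm_smul, mul_pow, Real.norm_eq_abs, sq_abs] at h₁
  rw [hy, inner_smul_right, norm_smul, mul_pow, Real.norm_eq_abs, sq_abs, ← neg_sub x y,
    inner_neg_right, norm_neg] at h₂
  simp only [smul_eq_mul]
  have := add_le_add (mul_le_mul_of_nonneg_left h₁ ha) (mul_le_mul_of_nonneg_left h₂ hb)
  obtain rfl : b = 1 - a := by linarith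
  linear_combination this

lemma StrongConvexOn.norm_sq_add_mul_comp_sub_add_mul_norm_sq (hf : StrongConvexOn univ m f)
    {lam₁ lam₂ : ℝ} (hlam₁ : 0 ≤ lam₁) (hlam₂ : 0 ≤ lam₂) (c : ℝ) (τ z u h : E) :
    StrongConvexOn univ (2 * c ^ 2 + lam₁ * m + 2 * lam₂)
      (fun x ↦ ‖c • (x + h) - τ‖ ^ 2 + lam₁ * f (x - u) + lam₂ * ‖x - z‖ ^ 2) := by
  have hsum := ((strongConvexOn_univ_norm_sq.comp_smul_add c (c • h - τ)).add
    ((hf.comp_smul_add 1 (-u)).const_mul hlam₁)).add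
    ((strongConvexOn_univ_norm_sq.comp_smul_add 1 (-z)).const_mul hlam₂)
  simp only [one_pow, one_mul, one_smul, ← sub_eq_add_neg] at hsum
  convert hsum using 1
  · ring
  · funext x
    simp only [Pi.add_apply, smul_add, add_sub_assoc]

lemma StrongConvexOn.add_half_mul_sq_norm_sub_le_of_isMinOn (hf : StrongConvexOn s m f)
    {x₀ : E} (hx₀ : x₀ ∈ s) (hmin : IsMinOn f s x₀) {x : E} (hx : x ∈ s) :
    f x₀ + m / 2 * ‖x - x₀‖ ^ 2 ≤ f x := by
  set A := m / 2 * ‖x - x₀‖ ^ 2 with hAdef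
  set B := f x - f x₀ with hBdef
  by_contra! hlt
  have hB : 0 ≤ B := sub_nonneg.2 (hmin hx)
  have hA : 0 < A := by linarith
  -- minimality on the segment forces `(1 - t) A ≤ B`, while this `t` gives `(A + B) / 2`
  set t := (A - B) / (2 * A) with htdef
  have ht : 0 < t := div_pos (by linarith) (by positivity)
  have ht1 : t ≤ 1 := by rw [div_le_one (by positivity)]; linarith
  have hseg := hf.2 hx₀ hx (sub_nonneg.2 ht1) ht.le (by ring)
  have hle : f x₀ ≤ f ((1 - t) • x₀ + t • x) :=
    hmin (hf.1 hx₀ hx (sub_nonneg.2 ht1) ht.le (by ring))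
  simp only [smul_eq_mul] at hseg
  rw [norm_sub_rev, ← hAdef] at hseg
  have key : t * ((1 - t) * A) ≤ t * B := by rw [hBdef]; linarith
  have : (1 - t) * A ≤ B := le_of_mul_le_mul_left key ht
  have : (1 - t) * A = (A + B) / 2 := by rw [htdef]; field_simp; ring
  linarith

lemma norm_sub_le_div_of_strongConvexOn_of_isMinOn {ψ₁ ψ₂ : E → ℝ} {η L : ℝ} {x₁ x₂ : E}
    (hη : 0 < η) (hL : 0 ≤ L) (h₁ : StrongConvexOn univ η ψ₁) (h₂ : StrongConvexOn univ η ψ₂)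
    (hx₁ : IsMinOn ψ₁ univ x₁) (hx₂ : IsMinOn ψ₂ univ x₂)
    (hgap : (ψ₂ x₁ - ψ₁ x₁) - (ψ₂ x₂ - ψ₁ x₂) ≤ L * ‖x₂ - x₁‖) :
    ‖x₂ - x₁‖ ≤ L / η := by
  have hgrowth₁ := h₁.add_half_mul_sq_norm_sub_le_of_isMinOn (mem_univ x₁) hx₁ (mem_univ x₂)
  have hgrowth₂ := h₂.add_half_mul_sq_norm_sub_le_of_isMinOn (mem_univ x₂) hx₂ (mem_univ x₁)
  rw [norm_sub_rev] at hgrowth₂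
  have hsq : η * ‖x₂ - x₁‖ * ‖x₂ - x₁‖ ≤ L * ‖x₂ - x₁‖ := by nlinarith
  rcases (norm_nonneg (x₂ - x₁)).eq_or_lt with hzero | hpos
  · rw [← hzero]
    positivity
  · rw [le_div_iff₀ hη, mul_comm]
    exact le_of_mul_le_mul_right hsq hpos

lemma norm_sub_sub_comp_sub_le [CompleteSpace E] {g : E → ℝ} {ℓ : ℝ}
    (hg : Differentiable ℝ g) (hgrad : ∀ a b, ‖gradient g a - gradient g b‖ ≤ ℓ * ‖a - b‖)
    (a b x y : E) :
    ‖(g (x - a) - g (x - b)) - (g (y - a) - g (y - b))‖ ≤ ℓ * ‖a - b‖ * ‖x - y‖ := by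
  have hdiffAt : ∀ p : E, DifferentiableAt ℝ (fun q ↦ g (q - a) - g (q - b)) p := fun p ↦
    ((differentiableAt_comp_sub a).2 (hg _)).sub ((differentiableAt_comp_sub b).2 (hg _))
  have hbound : ∀ p : E, ‖fderiv ℝ (fun q ↦ g (q - a) - g (q - b)) p‖ ≤ ℓ * ‖a - b‖ := by
    intro p
    rw [fderiv_fun_sub ((differentiableAt_comp_sub a).2 (hg _))
      ((differentiableAt_comp_sub b).2 (hg _)), fderiv_comp_sub, fderiv_comp_sub]
    calc ‖fderiv ℝ g (p - a) - fderiv ℝ g (p - b)‖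
        = ‖gradient g (p - a) - gradient g (p - b)‖ := by
          rw [gradient, gradient, ← map_sub, LinearIsometryEquiv.norm_map]
      _ ≤ ℓ * ‖(p - a) - (p - b)‖ := hgrad _ _
      _ = ℓ * ‖a - b‖ := by rw [sub_sub_sub_cancel_left, norm_sub_rev]
  exact convex_univ.norm_image_sub_le_of_norm_fderiv_le (fun p _ ↦ hdiffAt p)
    (fun p _ ↦ hbound p) (mem_univ y) (mem_univ x)

lemma norm_smul_add_sub_sq_sub_sub (c : ℝ) (τ a b x y : E) :
    (‖c • (x + a) - τ‖ ^ 2 - ‖c • (x + b) - τ‖ ^ 2)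
      - (‖c • (y + a) - τ‖ ^ 2 - ‖c • (y + b) - τ‖ ^ 2)
      = 2 * c ^ 2 * ⟪x - y, a - b⟫ := by
  simp only [norm_sub_sq_real, norm_smul, mul_pow, Real.norm_eq_abs, sq_abs, norm_add_sq_real,
    inner_smul_left, inner_add_left, inner_sub_left, inner_sub_right, RCLike.conj_to_real]
  ring

end InnerProductSpace

/-- Lipschitz stability of the minimizer of
`φ(x; u, h) = ‖(x+h)/(w+1) − τ‖² + λ₁ f(x − u) + λ₂ ‖x − z‖²`
with respect to the adversary target `u` and the history aggregate `h`. -/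
theorem stmt_3 (d : ℕ) (f : EuclideanSpace ℝ (Fin d) → ℝ) (m ℓ lam₁ lam₂ : ℝ) (w : ℕ)
    (τ z : EuclideanSpace ℝ (Fin d))
    (hm : 0 < m) (hℓ : 0 < ℓ) (hlam₁ : 0 < lam₁) (hlam₂ : 0 < lam₂)
    (hdiff : Differentiable ℝ f)
    (hstrong : ∀ a b : EuclideanSpace ℝ (Fin d),
      f a + ⟪gradient f a, b - a⟫ + m / 2 * ‖b - a‖ ^ 2 ≤ f b)
    (hsmooth : ∀ a b, ‖gradient f a - gradient f b‖ ≤ ℓ * ‖a - b‖)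
    (φ : EuclideanSpace ℝ (Fin d) → EuclideanSpace ℝ (Fin d) →
      EuclideanSpace ℝ (Fin d) → ℝ)
    (hφ : ∀ u h xx, φ u h xx =
      ‖((w : ℝ) + 1)⁻¹ • (xx + h) - τ‖ ^ 2 + lam₁ * f (xx - u) + lam₂ * ‖xx - z‖ ^ 2)
    (xmin : EuclideanSpace ℝ (Fin d) → EuclideanSpace ℝ (Fin d) →
      EuclideanSpace ℝ (Fin d))
    (hxmin : ∀ u h xx, φ u h (xmin u h) ≤ φ u h xx)
    (η : ℝ) (hη : η = 2 / ((w : ℝ) + 1) ^ 2 + lam₁ * m + 2 * lam₂)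
    (u hatu h hath : EuclideanSpace ℝ (Fin d)) :
    ‖xmin hatu hath - xmin u h‖ ≤
      (1 / η) * (lam₁ * ℓ * ‖hatu - u‖ + 2 / ((w : ℝ) + 1) ^ 2 * ‖hath - h‖) := by
  set c : ℝ := ((w : ℝ) + 1)⁻¹
  have hc : 2 / ((w : ℝ) + 1) ^ 2 = 2 * c ^ 2 := by simp only [c, inv_pow, div_eq_mul_inv]
  have hconv : ∀ u h, StrongConvexOn univ η (φ u h) := by
    intro u h
    rw [hη, hc, show φ u h = _ from funext (hφ u h)]
    exact (strongConvexOn_univ_of_le_add_inner _ hstrong).norm_sq_add_mul_comp_sub_add_mul_norm_sq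
      hlam₁.le hlam₂.le c τ z u h
  set x₁ := xmin u h
  set x₂ := xmin hatu hath
  have hgap : (φ hatu hath x₁ - φ u h x₁) - (φ hatu hath x₂ - φ u h x₂)
      ≤ (lam₁ * ℓ * ‖hatu - u‖ + 2 / ((w : ℝ) + 1) ^ 2 * ‖hath - h‖) * ‖x₂ - x₁‖ := by
    have hf := norm_sub_sub_comp_sub_le hdiff hsmooth hatu u x₁ x₂
    have hcs := real_inner_le_norm (x₁ - x₂) (hath - h)
    rw [norm_sub_rev x₁] at hf hcs
    calc (φ hatu hath x₁ - φ u h x₁) - (φ hatu hath x₂ - φ u h x₂)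
        = lam₁ * ((f (x₁ - hatu) - f (x₁ - u)) - (f (x₂ - hatu) - f (x₂ - u)))
          + 2 * c ^ 2 * ⟪x₁ - x₂, hath - h⟫ := by
          simp only [hφ]
          linear_combination norm_smul_add_sub_sq_sub_sub c τ hath h x₁ x₂
      _ ≤ lam₁ * (ℓ * ‖hatu - u‖ * ‖x₂ - x₁‖) + 2 * c ^ 2 * (‖x₂ - x₁‖ * ‖hath - h‖) := by
          gcongr
          exact (Real.le_norm_self _).trans hf
      _ = (lam₁ * ℓ * ‖hatu - u‖ + 2 / ((w : ℝ) + 1) ^ 2 * ‖hath - h‖) * ‖x₂ - x₁‖ := by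
          rw [hc]; ring
  rw [one_div_mul_eq_div]
  exact norm_sub_le_div_of_strongConvexOn_of_isMinOn (by rw [hη]; positivity) (by positivity)
    (hconv u h) (hconv hatu hath) (fun x _ ↦ hxmin u h x) (fun x _ ↦ hxmin hatu hath x) hgap
end

section
/- Let w ∈ ℕ, λ₁, λ₂, m > 0 satisfy 2w² < 2 + m λ₁ (w+1)². Then there exist α, β > 0 such that 2α + 2λ₂ + 2(1+β) w²/(w+1)² ≤ 2/(w+1)² + m λ₁ + 2λ₂, and for any such choice, max{1 + 1/β, 1 + λ₂/α} ≤ 1 + 2(λ₂(w+1)² + w²)/(m λ₁ (w+1)² + 2 − 2w²). -/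
/-!
Spend the slack `B` of the budget constraint entirely, splitting it so that the two ratios
`1 + 1/β` and `1 + λ₂/α` coincide, i.e. `α = λ₂ β`. Then `2 (λ₂ + c) β = B` with
`c = w²/(w+1)²`, and the common value `1 + 2 (λ₂ + c)/B` becomes the claimed bound after
clearing the denominator `(w+1)²`.
-/

theorem exists_budget_split_with_equal_ratios {lam c B : ℝ} (hlam : 0 < lam) (hc : 0 ≤ c)
    (hB : 0 < B) :
    ∃ α β : ℝ, 0 < α ∧ 0 < β ∧ 2 * α + 2 * β * c = B ∧
      max (1 + 1 / β) (1 + lam / α) = 1 + 2 * (lam + c) / B := by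
  have hsum : 0 < lam + c := by positivity
  refine ⟨lam * (B / (2 * (lam + c))), B / (2 * (lam + c)), by positivity, by positivity,
    by field_simp, ?_⟩
  have hratio : lam / (lam * (B / (2 * (lam + c)))) = 1 / (B / (2 * (lam + c))) := by
    field_simp
  rw [hratio, max_self, one_div_div]

theorem stmt_9_general (m lam₁ lam₂ : ℝ) (w : ℕ)
    (hlam₂ : 0 < lam₂)
    (hcond : 2 * (w : ℝ) ^ 2 < 2 + m * lam₁ * ((w : ℝ) + 1) ^ 2) :
    ∃ α β : ℝ, 0 < α ∧ 0 < β ∧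
      2 * α + 2 * lam₂ + 2 * (1 + β) * (w : ℝ) ^ 2 / ((w : ℝ) + 1) ^ 2
        ≤ 2 / ((w : ℝ) + 1) ^ 2 + m * lam₁ + 2 * lam₂ ∧
      max (1 + 1 / β) (1 + lam₂ / α)
        ≤ 1 + 2 * (lam₂ * ((w : ℝ) + 1) ^ 2 + (w : ℝ) ^ 2) /
            (m * lam₁ * ((w : ℝ) + 1) ^ 2 + 2 - 2 * (w : ℝ) ^ 2) := by
  set W : ℝ := (w : ℝ)
  have hW1 : W + 1 ≠ 0 := by positivity
  have hW : 0 < (W + 1) ^ 2 := by positivity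
  set c := W ^ 2 / (W + 1) ^ 2
  set B := 2 / (W + 1) ^ 2 + m * lam₁ - 2 * c
  have hB_eq : B = (m * lam₁ * (W + 1) ^ 2 + 2 - 2 * W ^ 2) / (W + 1) ^ 2 := by
    simp only [B, c]; field_simp [hW1]; ring
  have hB : 0 < B := by rw [hB_eq]; exact div_pos (by linarith) hW
  obtain ⟨α, β, hα, hβ, hbudget, hmax⟩ :=
    exists_budget_split_with_equal_ratios hlam₂ (by positivity : 0 ≤ c) hB
  refine ⟨α, β, hα, hβ, le_of_eq ?_, le_of_eq ?_⟩
  · have hsplit : 2 * (1 + β) * W ^ 2 / (W + 1) ^ 2 = 2 * c + 2 * β * c := by simp only [c]; ring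
    rw [hsplit]; linarith
  · have hnum : 2 * (lam₂ + c) * (W + 1) ^ 2 = 2 * (lam₂ * (W + 1) ^ 2 + W ^ 2) := by
      simp only [c]; field_simp [hW1]
    rw [hmax, hB_eq, div_div_eq_mul_div, hnum]

/-- parameter-selection step in the competitive-ratio proof for IGA. -/
theorem stmt_9 (m lam₁ lam₂ : ℝ) (w : ℕ)
    (hm : 0 < m) (hlam₁ : 0 < lam₁) (hlam₂ : 0 < lam₂)
    (hcond : 2 * (w : ℝ) ^ 2 < 2 + m * lam₁ * ((w : ℝ) + 1) ^ 2) :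
    ∃ α β : ℝ, 0 < α ∧ 0 < β ∧
      2 * α + 2 * lam₂ + 2 * (1 + β) * (w : ℝ) ^ 2 / ((w : ℝ) + 1) ^ 2
        ≤ 2 / ((w : ℝ) + 1) ^ 2 + m * lam₁ + 2 * lam₂ ∧
      max (1 + 1 / β) (1 + lam₂ / α)
        ≤ 1 + 2 * (lam₂ * ((w : ℝ) + 1) ^ 2 + (w : ℝ) ^ 2) /
            (m * lam₁ * ((w : ℝ) + 1) ^ 2 + 2 - 2 * (w : ℝ) ^ 2) :=
  stmt_9_general m lam₁ lam₂ w hlam₂ hcond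
end
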